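/- arXiv:2510.24032 — 7 statements merged into one kernel-verified Lean document; each statement's English description precedes it below -/
import Mathlib

section
/- Let S be a commutative Noetherian ring, φ : S → S an injective ring homomorphism, M a nonzero finitely generated S-module, and η : M → M an additive bijection such that η(s·x) = φ(s)·η(x) for all s ∈ S and x ∈ M. Then there exists an integer m > 0 such that (φ^m)^{-1}(Q) = Q for every associated prime ideal Q of M over S. -/
/-!
Since `η` is `φ`-semilinear, `φ⁻¹(ann (η x)) = ann x` for every `x : M`. Hence `Q ↦ φ⁻¹(Q)` maps
`Ass M` to itself, and onto it: a prime `ann x` is minimal over `φ⁻¹(ann (η x))`, so it is the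
contraction of a minimal prime of `ann (η x)`, which over a Noetherian ring is again an annihilator.
A surjective self-map of the finite set `Ass M` is a permutation, so some positive iterate of it is
the identity.
-/

def iterateRingHom {S : Type*} [CommRing S] (φ : S →+* S) : ℕ → (S →+* S)
  | 0 => RingHom.id S
  | m + 1 => (iterateRingHom φ m).comp φ

open Set Function

theorem Set.Finite.exists_pos_iterate_eqOn_id {α : Type*} {s : Set α} {f : α → α}
    (hs : s.Finite) (hf : BijOn f s s) : ∃ m, 0 < m ∧ EqOn f^[m] id s := by
  have : Finite s := hs.to_subtype
  obtain ⟨m, hm, hperiodic⟩ := isOfFinOrder_of_finite hf.equiv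
  refine ⟨m, hm, fun x hx ↦ ?_⟩
  have hσ : hf.equiv ^ m = 1 := by simpa [IsPeriodicPt, IsFixedPt] using hperiodic
  have hfixed := congrArg Subtype.val (Equiv.congr_fun hσ ⟨x, hx⟩)
  rw [Equiv.Perm.coe_pow, Equiv.Perm.coe_one, id_eq] at hfixed
  change ((hf.mapsTo.restrict f s s)^[m] ⟨x, hx⟩ : α) = x at hfixed
  rwa [hf.mapsTo.coe_iterate_restrict] at hfixed

theorem Ideal.comap_iterateRingHom {S : Type*} [CommRing S] (φ : S →+* S) (m : ℕ) (I : Ideal S) :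
    I.comap (iterateRingHom φ m) = (Ideal.comap φ)^[m] I := by
  induction m with
  | zero => exact Ideal.comap_id I
  | succ m ih => rw [iterate_succ_apply', ← ih, Ideal.comap_comap]; rfl

section TwistedIsomorphism

variable {S M : Type*} [CommRing S] [AddCommGroup M] [Module S M] {φ : S →+* S} {η : M ≃+ M}

theorem comap_colon_bot_singleton_eq (hη : ∀ (s : S) (x : M), η (s • x) = φ s • η x) (x : M) :
    ((⊥ : Submodule S M).colon {η x}).comap φ = (⊥ : Submodule S M).colon {x} := by
  ext s
  simp [Submodule.mem_colon_singleton, ← hη]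

theorem comap_mem_associatedPrimes (hη : ∀ (s : S) (x : M), η (s • x) = φ s • η x)
    {Q : Ideal S} (hQ : Q ∈ associatedPrimes S M) : Q.comap φ ∈ associatedPrimes S M := by
  obtain ⟨hprime, x, rfl⟩ := hQ
  refine ⟨hprime.comap φ, η.symm x, ?_⟩
  have hcolon := comap_colon_bot_singleton_eq hη (η.symm x)
  rw [η.apply_symm_apply] at hcolon
  rw [Ideal.comap_radical, hcolon]

theorem exists_mem_associatedPrimes_comap_eq [IsNoetherianRing S]
    (hη : ∀ (s : S) (x : M), η (s • x) = φ s • η x)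
    {Q : Ideal S} (hQ : Q ∈ associatedPrimes S M) :
    ∃ P ∈ associatedPrimes S M, P.comap φ = Q := by
  obtain ⟨hprime, x, rfl⟩ := isAssociatedPrime_iff.mp hQ
  have hmin : (⊥ : Submodule S M).colon {x} ∈
      (((⊥ : Submodule S M).colon {η x}).comap φ).minimalPrimes := by
    rw [comap_colon_bot_singleton_eq hη, Ideal.minimalPrimes_eq_subsingleton_self]
    rfl
  obtain ⟨P, hP, hPQ⟩ := Ideal.exists_minimalPrimes_comap_eq φ _ hmin
  obtain ⟨y, rfl⟩ := Submodule.exists_eq_colon_of_mem_minimalPrimes hP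
  exact ⟨_, isAssociatedPrime_iff.mpr ⟨hP.1.1, y, rfl⟩, hPQ⟩

end TwistedIsomorphism

theorem exists_iterate_comap_associatedPrimes_eq_general
    (S : Type*) [CommRing S] [IsNoetherianRing S]
    (φ : S →+* S)
    (M : Type*) [AddCommGroup M] [Module S M] [Module.Finite S M]
    (η : M ≃+ M)
    (hη : ∀ (s : S) (x : M), η (s • x) = φ s • η x) :
    ∃ m : ℕ, 0 < m ∧ ∀ Q ∈ associatedPrimes S M, Q.comap (iterateRingHom φ m) = Q := by
  have hfin : (associatedPrimes S M).Finite := associatedPrimes.finite S M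
  have hmaps : MapsTo (Ideal.comap φ) (associatedPrimes S M) (associatedPrimes S M) :=
    fun Q hQ ↦ comap_mem_associatedPrimes hη hQ
  have hsurj : SurjOn (Ideal.comap φ) (associatedPrimes S M) (associatedPrimes S M) :=
    fun Q hQ ↦ exists_mem_associatedPrimes_comap_eq hη hQ
  obtain ⟨m, hm, hperiodic⟩ :=
    hfin.exists_pos_iterate_eqOn_id ((hfin.surjOn_iff_bijOn_of_mapsTo hmaps).mp hsurj)
  exact ⟨m, hm, fun Q hQ ↦ (Ideal.comap_iterateRingHom φ m Q).trans (hperiodic hQ)⟩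

/-- Let `S` be a commutative Noetherian ring, `φ : S → S` an injective ring homomorphism,
`M` a nonzero finitely generated `S`-module, and `η : M → M` a `φ`-twisted isomorphism.
Then there is an integer `m > 0` with `(φ^m)⁻¹(Q) = Q` for every associated prime `Q` of `M`. -/
theorem exists_iterate_comap_associatedPrimes_eq
    (S : Type*) [CommRing S] [IsNoetherianRing S]
    (φ : S →+* S) (hφ : Function.Injective φ)
    (M : Type*) [AddCommGroup M] [Module S M] [Module.Finite S M] [Nontrivial M]
    (η : M ≃+ M)
    (hη : ∀ (s : S) (x : M), η (s • x) = φ s • η x) :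
    ∃ m : ℕ, 0 < m ∧ ∀ Q ∈ associatedPrimes S M, Q.comap (iterateRingHom φ m) = Q :=
  exists_iterate_comap_associatedPrimes_eq_general S φ M η hη
end

section
/- Let K be a field and S' a commutative K-algebra that is finitely generated as a K-algebra, with the structure map K → S' injective. Let M' be a nonzero finitely generated S'-module. Then M' is finite-dimensional as a K-vector space if and only if every associated prime ideal of M' over S' is a maximal ideal of S'. -/
/-!
Everything is read off the ring `S' ⧸ Ann M'`. A finitely generated module is finite dimensional
exactly when `S' ⧸ Ann M'` is: this ring acts faithfully on `M'`, so it embeds into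
`End_K M'`, and conversely `M'` is finite over it. By the Nullstellensatz, a finitely generated
`K`-algebra is finite dimensional iff it has Krull dimension zero, i.e. iff every minimal prime of
`Ann M'` is maximal. Finally, the minimal primes of `Ann M'` are associated primes, and every
associated prime contains one of them.
-/

namespace Module

variable (K S M : Type*) [CommRing S] [AddCommGroup M] [Module S M]

theorem finite_of_finite_quotient_annihilator [CommSemiring K] [Algebra K S] [Module K M]
    [IsScalarTower K S M] [Module.Finite S M] [Module.Finite K (S ⧸ annihilator S M)] :
    Module.Finite K M := by
  let := quotientAnnihilator (R := S) (M := M)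
  have hM := isTorsionBySet_annihilator S M
  have : IsScalarTower K (S ⧸ annihilator S M) M := hM.isScalarTower
  have : IsScalarTower S (S ⧸ annihilator S M) M := hM.isScalarTower
  have := Module.Finite.of_restrictScalars_finite S (S ⧸ annihilator S M) M
  exact Module.Finite.trans (S ⧸ annihilator S M) M

theorem ker_lsmul_eq_annihilator [CommSemiring K] [Algebra K S] [Module K M]
    [IsScalarTower K S M] :
    RingHom.ker (Algebra.lsmul K K M : S →ₐ[K] End K M) = annihilator S M := by
  ext s
  simp [mem_annihilator, LinearMap.ext_iff]

theorem finite_quotient_annihilator [Field K] [Algebra K S] [Module K M] [IsScalarTower K S M]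
    [Module.Finite K M] : Module.Finite K (S ⧸ annihilator S M) := by
  rw [← ker_lsmul_eq_annihilator K S M]
  let f : S →ₐ[K] End K M := Algebra.lsmul K K M
  exact .of_injective (Ideal.kerLiftAlg f).toLinearMap (Ideal.kerLiftAlg_injective f)

theorem finite_iff_finite_quotient_annihilator [Field K] [Algebra K S] [Module K M]
    [IsScalarTower K S M] [Module.Finite S M] :
    Module.Finite K M ↔ Module.Finite K (S ⧸ annihilator S M) :=
  ⟨fun _ ↦ finite_quotient_annihilator K S M,
    fun _ ↦ finite_of_finite_quotient_annihilator K S M⟩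

end Module

theorem forall_mem_associatedPrimes_isMaximal_iff {R M : Type*} [CommRing R] [IsNoetherianRing R]
    [AddCommGroup M] [Module R M] [Module.Finite R M] :
    (∀ Q ∈ associatedPrimes R M, Q.IsMaximal) ↔
      ∀ J ∈ (Module.annihilator R M).minimalPrimes, J.IsMaximal := by
  refine ⟨fun h J hJ ↦ h J
    (Module.associatedPrimes.minimalPrimes_annihilator_subset_associatedPrimes R M hJ),
    fun h Q hQ ↦ ?_⟩
  have hQprime := hQ.isPrime
  have hannQ : Module.annihilator R M ≤ Q :=
    Submodule.annihilator_top (R := R) (M := M) ▸ hQ.annihilator_le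
  obtain ⟨J, hJ, hJQ⟩ := Ideal.exists_minimalPrimes_le hannQ
  obtain rfl := (h J hJ).eq_of_le hQprime.ne_top hJQ
  exact h J hJ

theorem finiteDimensional_iff_associatedPrimes_isMaximal_general
    (K : Type*) [Field K] (S' : Type*) [CommRing S'] [Algebra K S']
    (hft : Algebra.FiniteType K S')
    (M' : Type*) [AddCommGroup M'] [Module K M'] [Module S' M']
    [IsScalarTower K S' M'] [Module.Finite S' M'] :
    FiniteDimensional K M' ↔ ∀ Q ∈ associatedPrimes S' M', Q.IsMaximal := by
  have : IsNoetherianRing S' := Algebra.FiniteType.isNoetherianRing K S'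
  rw [forall_mem_associatedPrimes_isMaximal_iff,
    ← Ideal.krullDimLE_zero_quotient_iff_forall_minimalPrimes_isMaximal,
    ← Module.finite_iff_krullDimLE_zero K]
  exact Module.finite_iff_finite_quotient_annihilator K S' M'

/-- Let `K` be a field and `S'` a finitely generated commutative `K`-algebra with injective
structure map, and let `M'` be a nonzero finitely generated `S'`-module. Then `M'` is finite
dimensional over `K` iff every associated prime of `M'` over `S'` is a maximal ideal. -/
theorem finiteDimensional_iff_associatedPrimes_isMaximal
    (K : Type*) [Field K] (S' : Type*) [CommRing S'] [Algebra K S']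
    (hft : Algebra.FiniteType K S')
    (hinj : Function.Injective (algebraMap K S'))
    (M' : Type*) [AddCommGroup M'] [Module K M'] [Module S' M']
    [IsScalarTower K S' M'] [Module.Finite S' M'] [Nontrivial M'] :
    FiniteDimensional K M' ↔ ∀ Q ∈ associatedPrimes S' M', Q.IsMaximal :=
  finiteDimensional_iff_associatedPrimes_isMaximal_general K S' hft M'
end

section
/- Let H be a finitely generated nontrivial abelian group, and let H₁ ≥ H₂ ≥ ⋯ ≥ H_k ≥ ⋯ be a descending sequence of subgroups of H such that ⋂_{k=1}^∞ H_k = 0 and each H_k is isomorphic to H. Then H is isomorphic to ℤⁿ for some integer n > 0, i.e., H is free abelian of positive finite rank. -/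
/-!
An injective endomorphism of a finite set is onto, so a subgroup `K ≅ G` of a group with finite
torsion must contain the whole torsion subgroup. A finitely generated abelian group has finite
torsion, so here the torsion lies in every `Hₖ`, hence in `⋂ Hₖ = 0`: `H` is torsion-free and
therefore free of finite rank, and the rank is positive because `H` is nontrivial.
-/

namespace CommGroup

@[to_additive]
theorem torsion_le_of_mulEquiv {G : Type*} [CommGroup G] [Finite (torsion G)] (K : Subgroup G)
    (e : K ≃* G) : torsion G ≤ K := by
  let g : G →* G := K.subtype.comp e.symm.toMonoidHom
  have hg : Function.Injective g := K.subtype_injective.comp e.symm.injective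
  have hmap : (torsion G).map g = torsion G :=
    Subgroup.eq_of_le_of_card_ge (map_torsion_le g) (Subgroup.card_map_of_injective hg).ge
  calc torsion G = (torsion G).map g := hmap.symm
    _ ≤ g.range := Subgroup.map_le_range g _
    _ ≤ K := by rintro _ ⟨x, rfl⟩; exact (e.symm x).2

end CommGroup

namespace AddCommGroup

instance finite_torsion (G : Type*) [AddCommGroup G] [AddGroup.FG G] : Finite (torsion G) := by
  have : Module.Finite ℤ G := Module.Finite.iff_addGroup_fg.mpr ‹_›
  have : Finite (Submodule.torsion ℤ G) :=
    Module.finite_of_fg_torsion _ Submodule.torsion_isTorsion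
  rwa [← Submodule.torsion_int]

theorem exists_addEquiv_fin_arrow_int (G : Type*) [AddCommGroup G] [AddGroup.FG G]
    [IsAddTorsionFree G] : ∃ n : ℕ, Nonempty (G ≃+ (Fin n → ℤ)) := by
  have : Module.Finite ℤ G := Module.Finite.iff_addGroup_fg.mpr ‹_›
  obtain ⟨n, b⟩ := Module.basisOfFiniteTypeTorsionFree' (R := ℤ) (M := G)
  exact ⟨n, ⟨b.equivFun.toAddEquiv⟩⟩

end AddCommGroup

theorem free_abelian_of_descending_isomorphic_subgroups_general
    (H : Type*) [AddCommGroup H] [AddGroup.FG H] [Nontrivial H]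
    (f : ℕ → AddSubgroup H)
    (hinter : (⨅ k : ℕ, f k) = ⊥)
    (hiso : ∀ k, Nonempty ((f k) ≃+ H)) :
    ∃ n : ℕ, 0 < n ∧ Nonempty (H ≃+ (Fin n → ℤ)) := by
  have htorsion : AddCommGroup.torsion H = ⊥ :=
    le_bot_iff.mp <| hinter ▸ le_iInf fun k ↦
      AddCommGroup.torsion_le_of_addEquiv (f k) (hiso k).some
  have : IsAddTorsionFree H := AddCommGroup.isAddTorsionFree_iff_torsion_eq_bot.mpr htorsion
  obtain ⟨n, ⟨e⟩⟩ := AddCommGroup.exists_addEquiv_fin_arrow_int H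
  refine ⟨n, Nat.pos_of_ne_zero ?_, ⟨e⟩⟩
  rintro rfl
  exact not_subsingleton H e.toEquiv.subsingleton

/-- Let `H` be a finitely generated nontrivial abelian group and
`H₁ ≥ H₂ ≥ ⋯` a descending sequence of subgroups of `H` with `⋂ₖ Hₖ = 0` and each
`Hₖ ≅ H`. Then `H ≅ ℤⁿ` for some `n > 0`. -/
theorem free_abelian_of_descending_isomorphic_subgroups
    (H : Type*) [AddCommGroup H] [AddGroup.FG H] [Nontrivial H]
    (f : ℕ → AddSubgroup H)
    (hdesc : ∀ k, f (k + 1) ≤ f k)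
    (hinter : (⨅ k : ℕ, f k) = ⊥)
    (hiso : ∀ k, Nonempty ((f k) ≃+ H)) :
    ∃ n : ℕ, 0 < n ∧ Nonempty (H ≃+ (Fin n → ℤ)) :=
  free_abelian_of_descending_isomorphic_subgroups_general H f hinter hiso
end

section
/- Let A be an n×n integer matrix. Then ⋂_{k=1}^∞ im A^k = 0 if and only if every complex eigenvalue α of A (i.e., every root in ℂ of the characteristic polynomial of A) satisfies: either α = 0, or α^{-1} is not integral over ℤ (that is, α^{-1} is not an algebraic integer). -/
/-!
If `α ≠ 0` and `α⁻¹` is integral, reversing a monic polynomial of `α⁻¹` gives `p` with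
`p(α) = 0` and unit constant term `c`. Then `p(A)` is singular, and writing `p = X q + c`
shows that `A` maps `ker p(A)` onto itself, so this nonzero kernel lies in every `im Aᵏ`.

Conversely, since `ℤⁿ` is Noetherian, `A` maps `I = ⋂ im Aᵏ` onto itself, hence is an
automorphism of the free module `I`. The characteristic polynomial of `A|_I` then has unit
constant term, so each of its complex roots `α` has `α⁻¹` integral; and `α` is a root of the
characteristic polynomial of `A`, which annihilates `A|_I`.
-/

open Polynomial LinearMap

theorem isIntegral_inv_iff_exists_isUnit_coeff_zero {R K : Type*} [CommRing R] [Field K]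
    [Algebra R K] {x : K} :
    x ≠ 0 ∧ IsIntegral R x⁻¹ ↔ ∃ p : R[X], IsUnit (p.coeff 0) ∧ aeval x p = 0 := by
  have : Nontrivial R := (algebraMap R K).domain_nontrivial
  constructor
  · rintro ⟨hx, q, hq, hqx⟩
    have : Invertible x⁻¹ := invertibleOfNonzero (inv_ne_zero hx)
    refine ⟨q.reverse, by rw [coeff_zero_reverse, hq.leadingCoeff]; exact isUnit_one, ?_⟩
    rw [aeval_def, ← inv_inv x, ← invOf_eq_inv x⁻¹, eval₂_reverse_eq_zero_iff]
    exact hqx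
  · rintro ⟨p, ⟨u, hu⟩, hpx⟩
    have hx : x ≠ 0 := by
      rintro rfl
      rw [← coeff_zero_eq_aeval_zero', ← hu] at hpx
      exact (u.isUnit.map (algebraMap R K)).ne_zero hpx
    have : Invertible x := invertibleOfNonzero hx
    refine ⟨hx, C ↑u⁻¹ * p.reverse, monic_C_mul_of_mul_leadingCoeff_eq_one ?_, ?_⟩
    · rw [reverse_leadingCoeff, trailingCoeff_eq_coeff_zero (hu ▸ u.ne_zero), ← hu,
        Units.inv_mul]
    · rw [eval₂_mul, eval₂_C, ← invOf_eq_inv,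
        (eval₂_reverse_eq_zero_iff (algebraMap R K) _ _).mpr hpx, mul_zero]

namespace Matrix

variable {n R K : Type*} [Fintype n] [DecidableEq n] [CommRing R] [Field K] [Algebra R K]

theorem map_aeval (A : Matrix n n R) (p : R[X]) :
    (aeval A p).map (algebraMap R K) = aeval (A.map (algebraMap R K)) p :=
  (aeval_algHom_apply ((Algebra.ofId R K).mapMatrix (m := n)) A p).symm

theorem aeval_mem_spectrum_map_aeval (A : Matrix n n R) {α : K}
    (hα : aeval α A.charpoly = 0) (p : R[X]) :
    aeval α p ∈ spectrum K ((aeval A p).map (algebraMap R K)) := by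
  have hσ : α ∈ spectrum K (A.map (algebraMap R K)) := by
    rwa [mem_spectrum_iff_isRoot_charpoly, charpoly_map, IsRoot, eval_map_algebraMap]
  have := spectrum.subset_polynomial_aeval _ (p.map (algebraMap R K)) ⟨α, hσ, rfl⟩
  dsimp only at this
  rwa [eval_map_algebraMap, aeval_map_algebraMap, ← map_aeval] at this

theorem iInter_range_pow_succ_mulVec (A : Matrix n n R) :
    ⋂ k : ℕ, Set.range ((A ^ (k + 1)).mulVec) = ↑(⨅ k : ℕ, range (toLin' A ^ k)) := by
  rw [Submodule.coe_iInf]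
  conv_rhs => rw [← Set.inter_iInter_nat_succ]
  simp only [pow_zero, Module.End.one_eq_id, range_id, Submodule.top_coe, Set.univ_inter,
    ← toLin'_pow, coe_range]
  rfl

end Matrix

theorem LinearMap.toMatrix_aeval {R M ι : Type*} [CommRing R] [AddCommGroup M] [Module R M]
    [Fintype ι] [DecidableEq ι] (b : Module.Basis ι R M) (f : Module.End R M) (p : R[X]) :
    toMatrix b b (aeval f p) = aeval (toMatrix b b f) p :=
  (aeval_algHom_apply (toMatrixAlgEquiv b).toAlgHom f p).symm

namespace Module.End

variable {R M : Type*} [CommRing R] [AddCommGroup M] [Module R M]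

theorem ker_aeval_le_map_of_isUnit_coeff_zero (f : End R M) {p : R[X]}
    (hp : IsUnit (p.coeff 0)) : ker (aeval f p) ≤ (ker (aeval f p)).map f := by
  obtain ⟨c, hc⟩ := hp
  intro v hv
  -- from `p = X * p.divX + C c`: on `ker (aeval f p)`, `f` is inverted by `-c⁻¹ • aeval f p.divX`
  have hv' : f (aeval f p.divX v) = -(c : R) • v := by
    rw [mem_ker, ← X_mul_divX_add p, ← hc] at hv
    simpa [Algebra.algebraMap_eq_smul_one, add_eq_zero_iff_eq_neg] using hv
  refine ⟨-(↑c⁻¹ : R) • aeval f p.divX v, ?_, ?_⟩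
  · rw [SetLike.mem_coe, mem_ker, map_smul, ← mul_apply, ← map_mul, mul_comm, map_mul,
      mul_apply, mem_ker.mp hv, map_zero, smul_zero]
  · rw [map_smul, hv', smul_smul, neg_mul_neg, Units.inv_mul, one_smul]

theorem le_range_pow_of_le_map (f : End R M) {N : Submodule R M} (hN : N ≤ N.map f) (k : ℕ) :
    N ≤ range (f ^ k) := by
  induction k with
  | zero => simp [one_eq_id]
  | succ k ih =>
    intro v hv
    obtain ⟨u, hu, rfl⟩ := hN hv
    obtain ⟨w, rfl⟩ := ih hu
    exact ⟨w, by rw [pow_succ', mul_apply]⟩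

theorem ker_aeval_le_iInf_range_pow (f : End R M) {p : R[X]} (hp : IsUnit (p.coeff 0)) :
    ker (aeval f p) ≤ ⨅ k : ℕ, range (f ^ k) :=
  le_iInf (le_range_pow_of_le_map f (ker_aeval_le_map_of_isUnit_coeff_zero f hp))

theorem mapsTo_iInf_range_pow (f : End R M) :
    ∀ x ∈ ⨅ k : ℕ, range (f ^ k), f x ∈ ⨅ k : ℕ, range (f ^ k) := by
  simp only [Submodule.mem_iInf]
  rintro x hx k
  obtain ⟨y, rfl⟩ := hx k
  exact ⟨f y, by rw [← mul_apply, ← pow_succ, pow_succ', mul_apply]⟩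

theorem iInf_range_pow_le_map [IsNoetherian R M] (f : End R M) :
    ⨅ k : ℕ, range (f ^ k) ≤ (⨅ k : ℕ, range (f ^ k)).map f := by
  obtain ⟨m, hdisj, hm⟩ := ((eventually_disjoint_ker_pow_range_pow f).and
    (Filter.eventually_ge_atTop 1)).exists
  have hinj : ∀ x ∈ range (f ^ m), f x = 0 → x = 0 := by
    refine disjoint_ker.mp (hdisj.symm.mono_right ?_)
    simpa using f.iterateKer.monotone hm
  intro w hw
  simp only [Submodule.mem_iInf] at hw
  obtain ⟨y, rfl⟩ := hw (m + 1)
  refine ⟨(f ^ m) y, (Submodule.mem_iInf _).mpr fun k => ?_, by rw [pow_succ', mul_apply]⟩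
  obtain ⟨z, hz⟩ := hw (m + k + 1)
  -- `f` is injective on `range (f ^ m)`, and both vectors below are preimages of `f ^ (m + 1) y`
  have : (f ^ m) y = (f ^ (m + k)) z := by
    rw [← sub_eq_zero]
    refine hinj _ (Submodule.sub_mem _ ⟨y, rfl⟩ ⟨(f ^ k) z, ?_⟩) ?_
    · rw [pow_add, mul_apply]
    · rw [map_sub, ← mul_apply, ← mul_apply, ← pow_succ', ← pow_succ', hz, sub_self]
  rw [this, add_comm, pow_add, mul_apply]
  exact mem_range_self _ _

theorem bijective_restrict_iInf_range_pow [IsNoetherian R M] (f : End R M) :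
    Function.Bijective (f.restrict (mapsTo_iInf_range_pow f)) := by
  refine IsNoetherian.bijective_of_surjective_endomorphism _ fun ⟨y, hy⟩ => ?_
  obtain ⟨x, hx, rfl⟩ := iInf_range_pow_le_map f hy
  exact ⟨⟨x, hx⟩, rfl⟩

theorem aeval_restrict_apply (f : End R M) {N : Submodule R M} (h : ∀ x ∈ N, f x ∈ N)
    (p : R[X]) (x : N) : (aeval (f.restrict h) p x : M) = aeval f p x := by
  induction p using Polynomial.induction_on' with
  | add p q hp hq => simp [hp, hq]
  | monomial k a =>
    simp only [aeval_monomial, Algebra.algebraMap_eq_smul_one, smul_mul_assoc, one_mul,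
      pow_restrict k h]
    rfl

variable [Module.Free R M] [Module.Finite R M]

theorem isUnit_charpoly_coeff_zero {f : End R M} (hf : IsUnit f) :
    IsUnit (f.charpoly.coeff 0) := by
  have := LinearMap.isUnit_det f hf
  rw [det_eq_sign_charpoly_coeff] at this
  exact (IsUnit.mul_iff.mp this).2

variable {K : Type*} [Field K] [Algebra R K]

theorem exists_aeval_charpoly_eq_zero [IsDomain R] [IsAlgClosed K] [FaithfulSMul R K]
    [Nontrivial M] (f : End R M) : ∃ α : K, aeval α f.charpoly = 0 := by
  refine IsAlgClosed.exists_aeval_eq_zero K _ ?_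
  rw [degree_eq_natDegree f.charpoly_monic.ne_zero, charpoly_natDegree, Nat.cast_ne_zero]
  exact Module.finrank_pos.ne'

theorem det_aeval_eq_zero_of_aeval_charpoly_eq_zero [FaithfulSMul R K] (f : End R M) {α : K}
    (hα : aeval α f.charpoly = 0) {p : R[X]} (hp : aeval α p = 0) : (aeval f p).det = 0 := by
  classical
  let b := Module.Free.chooseBasis R M
  have := (toMatrix b b f).aeval_mem_spectrum_map_aeval (by rwa [charpoly_toMatrix]) p
  rw [hp, spectrum.zero_mem_iff, Matrix.isUnit_iff_isUnit_det, ← RingHom.mapMatrix_apply,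
    ← RingHom.map_det, ← toMatrix_aeval, det_toMatrix, isUnit_iff_ne_zero, not_not] at this
  exact (FaithfulSMul.algebraMap_injective R K).eq_iff.mp (this.trans (map_zero _).symm)

theorem aeval_eq_zero_of_aeval_charpoly_eq_zero (f : End R M) {α : K}
    (hα : aeval α f.charpoly = 0) {p : R[X]} (hp : aeval f p = 0) : aeval α p = 0 := by
  classical
  let b := Module.Free.chooseBasis R M
  have := (toMatrix b b f).aeval_mem_spectrum_map_aeval (by rwa [charpoly_toMatrix]) p
  rw [← toMatrix_aeval, hp, map_zero, Matrix.map_zero _ (map_zero _), spectrum.mem_iff,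
    sub_zero] at this
  by_contra h
  exact this ((Ne.isUnit h).map _)

theorem iInf_range_pow_eq_bot_iff [IsDomain R] [IsPrincipalIdealRing R] [IsAlgClosed K]
    [FaithfulSMul R K] (f : End R M) :
    ⨅ k : ℕ, range (f ^ k) = ⊥ ↔
      ∀ α : K, aeval α f.charpoly = 0 → α = 0 ∨ ¬IsIntegral R α⁻¹ := by
  simp only [or_iff_not_and_not, not_not]
  constructor
  · rintro h α hα hαint
    obtain ⟨p, hp, hpα⟩ := isIntegral_inv_iff_exists_isUnit_coeff_zero.mp hαint
    refine det_eq_zero_iff_ker_ne_bot.mp (det_aeval_eq_zero_of_aeval_charpoly_eq_zero f hα hpα) ?_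
    exact eq_bot_iff.mpr (h ▸ ker_aeval_le_iInf_range_pow f hp)
  · intro h
    by_contra hI
    have : Nontrivial (⨅ k : ℕ, range (f ^ k) : Submodule R M) :=
      Submodule.nontrivial_iff_ne_bot.mpr hI
    set g := f.restrict (mapsTo_iInf_range_pow f)
    obtain ⟨α, hα⟩ := exists_aeval_charpoly_eq_zero (K := K) g
    have hg := isUnit_charpoly_coeff_zero ((isUnit_iff g).mpr (bijective_restrict_iInf_range_pow f))
    refine h α (aeval_eq_zero_of_aeval_charpoly_eq_zero g hα ?_)
      (isIntegral_inv_iff_exists_isUnit_coeff_zero.mpr ⟨_, hg, hα⟩)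
    ext x
    simp [g, aeval_restrict_apply, aeval_self_charpoly]

end Module.End

/-- **Lemma.** For an `n×n` integer matrix `A`, `⋂_{k≥1} im Aᵏ = 0` if and only if every
complex root `α` of the characteristic polynomial of `A` is either `0` or has `α⁻¹` not
integral over `ℤ` (i.e. `α⁻¹` is not an algebraic integer). -/
theorem inter_range_pow_eq_bot_iff_eigenvalues
    (n : ℕ) (A : Matrix (Fin n) (Fin n) ℤ) :
    (⋂ k : ℕ, Set.range ((A ^ (k + 1)).mulVec)) = {0} ↔
      ∀ α : ℂ, (Polynomial.aeval α) A.charpoly = 0 →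
        α = 0 ∨ ¬ IsIntegral ℤ α⁻¹ := by
  rw [Matrix.iInter_range_pow_succ_mulVec, ← Submodule.bot_coe (R := ℤ), SetLike.coe_set_eq,
    ← Matrix.charpoly_toLin']
  exact Module.End.iInf_range_pow_eq_bot_iff _
end

section
/- Let A be an n×n integer matrix with det A ≠ 0 and ⋂_{k=1}^∞ im A^k = 0. Suppose B is an n×n integer matrix invertible over ℤ (i.e., det B = ±1) such that B·A·B^{-1} is block lower triangular of the form [[A₁, 0], [A₂, A₃]], where A₁ is an r×r block with 1 ≤ r ≤ n. Then |det A₁| > 1. -/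
open Matrix Polynomial

/-! Conjugation by `B` preserves `det A` and, through `B⁻¹`, the images `im Aᵏ`, so we work with
`C = B A B⁻¹`. Then `det C = det A₁ · det A₃ ≠ 0` gives `det A₁ ≠ 0`. If `|det A₁| = 1`, the
characteristic polynomial `χ` of `A₁` has unit constant term `c`, and the first `r` rows of `χ(C)`
vanish because the top rows of `C` act through `A₁` and `χ(A₁) = 0`. So `χ(C) v = 0` for some
`v ≠ 0`. Writing `χ = X g + c`, we get `v = C w` with `w = -c⁻¹ g(C) v`, and `χ(C) w = 0` again;
hence `v ∈ im Cᵏ` for every `k`, contradicting `⋂ im Aᵏ = 0`. -/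

namespace Matrix

section Intertwining

variable {R m n : Type*} [CommSemiring R] [Fintype m] [Fintype n] [DecidableEq m] [DecidableEq n]
  {P : Matrix m n R} {M : Matrix n n R} {N : Matrix m m R}

theorem mul_pow_eq_pow_mul_of_mul_eq (h : P * M = N * P) (k : ℕ) : P * M ^ k = N ^ k * P := by
  induction k with
  | zero => simp
  | succ k ih => rw [pow_succ, ← Matrix.mul_assoc, ih, Matrix.mul_assoc, h, pow_succ,
      Matrix.mul_assoc]

theorem mul_aeval_eq_aeval_mul_of_mul_eq (h : P * M = N * P) (p : R[X]) :
    P * aeval M p = aeval N p * P := by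
  simp only [aeval_eq_sum_range, Matrix.mul_sum, Matrix.sum_mul, Matrix.mul_smul, Matrix.smul_mul,
    mul_pow_eq_pow_mul_of_mul_eq h]

theorem mulVec_mem_range_mulVec_pow_of_mul_eq (h : P * M = N * P) (k : ℕ) {v : n → R}
    (hv : v ∈ Set.range (M ^ k).mulVec) : P *ᵥ v ∈ Set.range (N ^ k).mulVec := by
  obtain ⟨w, rfl⟩ := hv
  exact ⟨P *ᵥ w, by rw [mulVec_mulVec, mulVec_mulVec, mul_pow_eq_pow_mul_of_mul_eq h]⟩

end Intertwining

variable {R : Type*} [CommRing R]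

theorem isUnit_charpoly_coeff_zero {n : Type*} [Fintype n] [DecidableEq n] {M : Matrix n n R}
    (hM : IsUnit M.det) : IsUnit (M.charpoly.coeff 0) :=
  isUnit_of_mul_isUnit_right (M.det_eq_sign_charpoly_coeff ▸ hM)

theorem mem_range_mulVec_pow_of_aeval_mulVec_eq_zero {n : Type*} [Fintype n] [DecidableEq n]
    {M : Matrix n n R} {p : R[X]} (hp : IsUnit (p.coeff 0)) (k : ℕ) {v : n → R}
    (hv : aeval M p *ᵥ v = 0) : v ∈ Set.range (M ^ k).mulVec := by
  induction k generalizing v with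
  | zero => exact ⟨v, one_mulVec v⟩
  | succ k ih =>
    have hsplit : M *ᵥ (aeval M p.divX *ᵥ v) = -(p.coeff 0 • v) := by
      rw [← X_mul_divX_add p, map_add, map_mul, aeval_X, aeval_C, add_mulVec, ← mulVec_mulVec,
        Algebra.algebraMap_eq_smul_one, smul_mulVec, one_mulVec] at hv
      exact eq_neg_of_add_eq_zero_left hv
    set w := -(↑hp.unit⁻¹ : R) • (aeval M p.divX *ᵥ v)
    have hMw : M *ᵥ w = v := by
      rw [mulVec_smul, hsplit, smul_neg, neg_smul, neg_neg, smul_smul, IsUnit.val_inv_mul, one_smul]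
    have hw : aeval M p *ᵥ w = 0 := by
      rw [mulVec_smul, mulVec_mulVec, ((Commute.all p p.divX).map (aeval M)).eq, ← mulVec_mulVec,
        hv, mulVec_zero, smul_zero]
    obtain ⟨x, hx⟩ := ih hw
    exact ⟨x, by rw [pow_succ', ← mulVec_mulVec, hx, hMw]⟩

section BlockLowerTriangular

variable {n r : ℕ} (hrn : r ≤ n) {C : Matrix (Fin n) (Fin n) R}
  (hC : ∀ i j : Fin n, (i : ℕ) < r → r ≤ (j : ℕ) → C i j = 0)
include hC

theorem det_submatrix_castLE_dvd_det :
    (C.submatrix (Fin.castLE hrn) (Fin.castLE hrn)).det ∣ C.det := by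
  rw [twoBlockTriangular_det' C (fun i => (i : ℕ) < r) fun i hi j hj => hC i j hi (not_lt.mp hj),
    ← det_submatrix_equiv_self (Fin.castLEOrderIso hrn).toEquiv]
  exact dvd_mul_right _ _

theorem one_submatrix_castLE_mul_eq :
    (1 : Matrix (Fin n) (Fin n) R).submatrix (Fin.castLE hrn) id * C =
      C.submatrix (Fin.castLE hrn) (Fin.castLE hrn) *
        (1 : Matrix (Fin n) (Fin n) R).submatrix (Fin.castLE hrn) id := by
  ext i j
  simp only [mul_apply, submatrix_apply, one_apply, id, ite_mul, one_mul, zero_mul, mul_ite,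
    mul_one, mul_zero, Finset.sum_ite_eq, Finset.mem_univ, if_true]
  rcases lt_or_ge (j : ℕ) r with hj | hj
  · obtain ⟨j, rfl⟩ : ∃ j' : Fin r, Fin.castLE hrn j' = j := ⟨⟨j, hj⟩, rfl⟩
    simp [(Fin.castLE_injective hrn).eq_iff]
  · rw [hC _ j i.isLt hj]
    refine (Finset.sum_eq_zero fun k _ => if_neg ?_).symm
    rintro rfl
    exact absurd k.isLt (not_lt.mpr hj)

theorem det_aeval_charpoly_submatrix_castLE_eq_zero (hr : 0 < r) :
    (aeval C (C.submatrix (Fin.castLE hrn) (Fin.castLE hrn)).charpoly).det = 0 := by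
  have hrows := mul_aeval_eq_aeval_mul_of_mul_eq (one_submatrix_castLE_mul_eq hrn hC)
    (C.submatrix (Fin.castLE hrn) (Fin.castLE hrn)).charpoly
  rw [aeval_self_charpoly, Matrix.zero_mul] at hrows
  refine det_eq_zero_of_row_eq_zero (Fin.castLE hrn ⟨0, hr⟩) fun j => ?_
  simpa [Matrix.mul_apply, Matrix.one_apply] using congrFun (congrFun hrows ⟨0, hr⟩) j

end BlockLowerTriangular

end Matrix

/-- Let `A` be an `n×n` integer matrix with `det A ≠ 0` and `⋂_{k≥1} im Aᵏ = 0`. If `B` is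
invertible over `ℤ` and `B·A·B⁻¹` is block lower triangular with top-left `r×r` block `A₁`
(`1 ≤ r ≤ n`), then `|det A₁| > 1`. -/
theorem abs_det_block_gt_one
    (n r : ℕ) (hr : 1 ≤ r) (hrn : r ≤ n)
    (A B : Matrix (Fin n) (Fin n) ℤ)
    (hdet : A.det ≠ 0)
    (hA : (⋂ k : ℕ, Set.range ((A ^ (k + 1)).mulVec)) = {0})
    (hB : IsUnit B.det)
    (htri : ∀ i j : Fin n, (i : ℕ) < r → r ≤ (j : ℕ) → (B * A * B⁻¹) i j = 0) :
    1 < (Matrix.det (Matrix.of fun i j : Fin r =>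
        (B * A * B⁻¹) (Fin.castLE hrn i) (Fin.castLE hrn j))).natAbs := by
  set C := B * A * B⁻¹
  set A₁ := C.submatrix (Fin.castLE hrn) (Fin.castLE hrn)
  change 1 < A₁.det.natAbs
  have hA₁ : A₁.det ≠ 0 := ne_zero_of_dvd_ne_zero hdet
    (det_conj ((isUnit_iff_isUnit_det B).mpr hB) A ▸ det_submatrix_castLE_dvd_det hrn htri)
  refine lt_of_le_of_ne (Int.natAbs_pos.mpr hA₁) fun h1 => ?_
  obtain ⟨v, hv0, hv⟩ := exists_mulVec_eq_zero_iff.mpr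
    (det_aeval_charpoly_submatrix_castLE_eq_zero hrn htri hr)
  have hconj : B⁻¹ * C = A * B⁻¹ := by
    simp only [C, ← Matrix.mul_assoc, nonsing_inv_mul B hB, Matrix.one_mul]
  have hmem : B⁻¹ *ᵥ v ∈ ⋂ k : ℕ, Set.range ((A ^ (k + 1)).mulVec) :=
    Set.mem_iInter.mpr fun k => mulVec_mem_range_mulVec_pow_of_mul_eq hconj (k + 1)
      (mem_range_mulVec_pow_of_aeval_mulVec_eq_zero
        (isUnit_charpoly_coeff_zero (Int.isUnit_iff_natAbs_eq.mpr h1.symm)) (k + 1) hv)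
  rw [hA, Set.mem_singleton_iff] at hmem
  apply hv0
  rw [← one_mulVec v, ← mul_nonsing_inv B hB, ← mulVec_mulVec, hmem, mulVec_zero]
end

section
/- The group Q(2,3) is not finitely presented: there exist no natural number n and no finite set of relators rels ⊆ FreeGroup(Fin n) such that Q(2,3) is isomorphic to the presented group on n generators with relators rels. -/
open Multiplicative

/-- `ℤ[1/6]` as an additive subgroup of `ℚ`. -/
def Z16 : AddSubgroup ℚ where
  carrier := {q : ℚ | ∃ (m : ℤ) (k : ℕ), q = m / 6 ^ k}
  zero_mem' := ⟨0, 0, by norm_num⟩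
  add_mem' := by
    rintro a b ⟨m, k, rfl⟩ ⟨m', k', rfl⟩
    refine ⟨m * 6 ^ k' + m' * 6 ^ k, k + k', ?_⟩
    push_cast
    rw [pow_add]
    field_simp
  neg_mem' := by
    rintro a ⟨m, k, rfl⟩
    exact ⟨-m, k, by push_cast; ring⟩

/-- Multiplication by `3/2` as an additive automorphism of `ℤ[1/6]`. -/
def mul32 : Z16 ≃+ Z16 where
  toFun q := ⟨(3 / 2 : ℚ) * q, by
    obtain ⟨m, k, hq⟩ := q.2
    refine ⟨9 * m, k + 1, ?_⟩
    rw [hq]; push_cast; rw [pow_succ]; field_simp; ring⟩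
  invFun q := ⟨(2 / 3 : ℚ) * q, by
    obtain ⟨m, k, hq⟩ := q.2
    refine ⟨4 * m, k + 1, ?_⟩
    rw [hq]; push_cast; rw [pow_succ]; field_simp; ring⟩
  left_inv q := Subtype.ext (by
    show (2 / 3 : ℚ) * ((3 / 2 : ℚ) * (q : ℚ)) = (q : ℚ)
    ring)
  right_inv q := Subtype.ext (by
    show (3 / 2 : ℚ) * ((2 / 3 : ℚ) * (q : ℚ)) = (q : ℚ)
    ring)
  map_add' a b := Subtype.ext (by push_cast; ring)

/-- The action of `ℤ` on `ℤ[1/6]` in which `1` acts by multiplication by `3/2`. -/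
def phiQ : Multiplicative ℤ →* MulAut (Multiplicative Z16) :=
  zpowersHom (MulAut (Multiplicative Z16)) (AddEquiv.toMultiplicative mul32)

/-- The group `Q(2,3) = ℤ[1/6] ⋊ ℤ`, where the generator `1 ∈ ℤ` acts on `ℤ[1/6]` by
multiplication by `3/2`. -/
abbrev Q23 : Type := SemidirectProduct (Multiplicative Z16) (Multiplicative ℤ) phiQ

/-- The element `(1, 0)` of `Q(2,3)`. -/
def Qa : Q23 := SemidirectProduct.inl (ofAdd (⟨1, 1, 0, by norm_num⟩ : Z16))

/-- The element `(0, 1)` of `Q(2,3)`. -/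
def Qt : Q23 := SemidirectProduct.inr (ofAdd (1 : ℤ))

/-- The single relator `t a² t⁻¹ a⁻³` of the Baumslag–Solitar group `BS(2,3)`,
with generator `0` playing the role of `a` and generator `1` the role of `t`. -/
def BSrels : Set (FreeGroup (Fin 2)) :=
  {FreeGroup.of 1 * FreeGroup.of 0 ^ 2 * (FreeGroup.of 1)⁻¹ * (FreeGroup.of 0 ^ 3)⁻¹}

/-- The Baumslag–Solitar group `BS(2,3) = ⟨a, t ∣ t a² t⁻¹ = a³⟩`. -/
abbrev BS23 : Type := PresentedGroup BSrels

/-- The generator `a` of `BS(2,3)`. -/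
def BSa : BS23 := PresentedGroup.of 0

/-- The generator `t` of `BS(2,3)`. -/
def BSt : BS23 := PresentedGroup.of 1

/-!
`Q(2,3)` has the infinite presentation `⟨a, t ∣ t a² t⁻¹ = a³, [a, tⁿ a t⁻ⁿ] (n ∈ ℕ)⟩`. The
commutator relators make all conjugates `tⁱ a t⁻ⁱ` commute, and then
`b ↦ (t b t⁻¹) (t⁻¹ b t) b⁻²`, which is `b ↦ (3/2 + 2/3 - 2) b = b / 6` in `ℤ[1/6]`, produces a
compatible sequence of sixth roots of `a`; these give the inverse of the obvious map from the
presented group onto `ℤ[1/6] ⋊ ℤ`.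

If `Q(2,3)` were finitely presented, the kernel of `F(a, t) → Q(2,3)` would be the normal closure
of finitely many elements, hence of the relators with `n ≤ N` for some `N`. In the
Baumslag–Solitar group `BS(2,3)`, seen as an HNN extension of `ℤ`, the elements `a ↦ 2ᴺ` and
`t ↦ t` satisfy these relators, since `tᵏ 2ᴺ t⁻ᵏ = 3ᵏ 2ᴺ⁻ᵏ` stays in `ℤ` for `k ≤ N`; but
`[2ᴺ, t 3ᴺ t⁻¹] ≠ 1` by Britton's lemma.
-/

open Subgroup in
theorem Subgroup.IsFinitelyNormallyGenerated.exists_normalClosure_eq {G : Type*} [Group G]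
    {ι : Type*} [Nonempty ι] {R : ι → Set G} (hR : Directed (· ⊆ ·) R)
    (h : (normalClosure (⋃ i, R i)).IsFinitelyNormallyGenerated) :
    ∃ i, normalClosure (R i) = normalClosure (⋃ i, R i) := by
  classical
  obtain ⟨S, hS, hSR⟩ := h
  have hdir : Directed (· ≤ ·) fun i ↦ normalClosure (R i) := fun i j ↦
    let ⟨k, hik, hjk⟩ := hR i j
    ⟨k, normalClosure_mono hik, normalClosure_mono hjk⟩
  have hsup : normalClosure (⋃ i, R i) ≤ ⨆ i, normalClosure (R i) :=
    normalClosure_le_normal <| Set.iUnion_subset fun i ↦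
      subset_normalClosure.trans (le_iSup (fun i ↦ normalClosure (R i)) i)
  have hmem : ∀ s ∈ S, ∃ i, s ∈ normalClosure (R i) := fun s hs ↦
    (mem_iSup_of_directed hdir).mp (hsup (hSR ▸ subset_normalClosure hs))
  choose! idx hidx using hmem
  obtain ⟨j, hj⟩ := hdir.finset_le (hS.toFinset.image idx)
  refine ⟨j, le_antisymm (normalClosure_mono (Set.subset_iUnion R j)) ?_⟩
  rw [← hSR]
  exact normalClosure_le_normal fun s hs ↦
    hj _ (Finset.mem_image_of_mem _ (hS.mem_toFinset.mpr hs)) (hidx s hs)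

open Function Subgroup in
theorem Group.IsFinitelyPresented.ker_isFinitelyNormallyGenerated {G : Type*} [Group G]
    [hG : Group.IsFinitelyPresented G] {α : Type*} [Finite α] (φ : FreeGroup α →* G)
    (hφ : Surjective φ) : φ.ker.IsFinitelyNormallyGenerated := by
  obtain ⟨n, ψ, hψ, R, hR, hRψ⟩ := hG.out
  set θ : FreeGroup α →* FreeGroup (Fin n) := FreeGroup.lift fun a ↦ surjInv hψ (φ (.of a))
  set σ : FreeGroup (Fin n) →* FreeGroup α := FreeGroup.lift fun i ↦ surjInv hφ (ψ (.of i))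
  have hψθ : ψ.comp θ = φ := FreeGroup.ext_hom _ _ fun a ↦ by simp [θ, surjInv_eq]
  have hφσ : φ.comp σ = ψ := FreeGroup.ext_hom _ _ fun i ↦ by simp [σ, surjInv_eq]
  -- `σ ∘ θ` is the identity modulo the relators `a⁻¹ σ (θ a)`.
  set S := σ '' R ∪ Set.range fun a ↦ (FreeGroup.of a)⁻¹ * σ (θ (.of a))
  refine ⟨S, (hR.image σ).union (Set.finite_range _), le_antisymm ?_ ?_⟩
  · refine normalClosure_le_normal ?_
    rintro _ (⟨r, hr, rfl⟩ | ⟨a, rfl⟩)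
    · show φ (σ r) = 1
      rw [← MonoidHom.comp_apply, hφσ, ← MonoidHom.mem_ker, ← hRψ]
      exact subset_normalClosure hr
    · show φ ((FreeGroup.of a)⁻¹ * σ (θ (.of a))) = 1
      rw [map_mul, map_inv, ← MonoidHom.comp_apply φ σ, hφσ, ← MonoidHom.comp_apply ψ θ, hψθ,
        inv_mul_cancel]
  · intro u hu
    set μ := QuotientGroup.mk' (normalClosure S)
    have hμ : μ.comp (σ.comp θ) = μ := FreeGroup.ext_hom _ _ fun a ↦ by
      refine (inv_mul_eq_one.mp ?_).symm
      rw [← map_inv, MonoidHom.comp_apply, ← map_mul]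
      exact (QuotientGroup.eq_one_iff _).mpr (subset_normalClosure (Or.inr ⟨a, rfl⟩))
    have hθu : θ u ∈ normalClosure R := by
      rw [hRψ, MonoidHom.mem_ker, ← MonoidHom.comp_apply, hψθ]; exact hu
    have hσθu : σ (θ u) ∈ normalClosure S :=
      normalClosure_mono Set.subset_union_left (map_normalClosure_le R σ ⟨_, hθu, rfl⟩)
    rw [← QuotientGroup.eq_one_iff]
    calc (u : FreeGroup α ⧸ normalClosure S) = μ (σ (θ u)) := (DFunLike.congr_fun hμ u).symm
      _ = 1 := (QuotientGroup.eq_one_iff _).mpr hσθu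

theorem PresentedGroup.ker_mk {α : Type*} (rels : Set (FreeGroup α)) :
    (PresentedGroup.mk rels).ker = Subgroup.normalClosure rels :=
  Subgroup.ext fun _ ↦ PresentedGroup.mk_eq_one_iff

theorem MulAut.map_zpow_apply_of_map_apply {M N : Type*} [Group M] [Group N] (f : M →* N)
    {α : MulAut M} {β : MulAut N} (h : ∀ x, f (α x) = β (f x)) (n : ℤ) (x : M) :
    f ((α ^ n) x) = (β ^ n) (f x) := by
  induction n using Int.induction_on generalizing x with
  | zero => simp
  | succ n ih => rw [zpow_add_one, zpow_add_one, MulAut.mul_apply, MulAut.mul_apply, ih, h]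
  | pred n ih =>
    have h_inv : f (α⁻¹ x) = β⁻¹ (f x) := by
      rw [← MulAut.inv_apply_self N β (f (α⁻¹ x)), ← h, MulAut.apply_inv_self]
    rw [zpow_sub_one, zpow_sub_one, MulAut.mul_apply, MulAut.mul_apply, ih, h_inv]

section SixthRoot

variable {G : Type*} [Group G]

theorem Commute.mul_mul_inv_sq_pow {x y z : G} (hxy : Commute x y) (hxz : Commute x z)
    (hyz : Commute y z) (n : ℕ) :
    (z * x * (y ^ 2)⁻¹) ^ n = z ^ n * x ^ n * ((y ^ 2)⁻¹) ^ n := by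
  rw [(((hyz.symm.mul_left hxy).pow_right 2).inv_right).mul_pow, hxz.symm.mul_pow]

structure SatisfiesQ23Relations (τ : MulAut G) (b : G) : Prop where
  commute_zpow : ∀ i j : ℤ, Commute ((τ ^ i) b) ((τ ^ j) b)
  map_sq : τ (b ^ 2) = b ^ 3

def sixthRoot (τ : MulAut G) (b : G) : G := τ b * τ⁻¹ b * (b ^ 2)⁻¹

theorem zpow_apply_sixthRoot (τ : MulAut G) (b : G) (i : ℤ) :
    (τ ^ i) (sixthRoot τ b) = (τ ^ (i + 1)) b * (τ ^ (i - 1)) b * (((τ ^ i) b) ^ 2)⁻¹ := by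
  rw [sixthRoot, map_mul, map_mul, map_inv, map_pow, zpow_add_one, zpow_sub_one,
    MulAut.mul_apply, MulAut.mul_apply]

namespace SatisfiesQ23Relations

variable {τ : MulAut G} {b : G} (h : SatisfiesQ23Relations τ b)
include h

theorem commute_inv_self : Commute (τ⁻¹ b) b := by
  simpa using h.commute_zpow (-1) 0

theorem commute_inv_map : Commute (τ⁻¹ b) (τ b) := by
  simpa using h.commute_zpow (-1) 1

theorem commute_self_map : Commute b (τ b) := by
  simpa using h.commute_zpow 0 1

theorem sq_eq_inv_pow_three : b ^ 2 = (τ⁻¹ b) ^ 3 := by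
  rw [← map_pow, ← h.map_sq, MulAut.inv_apply_self]

theorem sq_map : (τ b) ^ 2 = b ^ 3 := by
  rw [← map_pow, h.map_sq]

theorem sixthRoot_pow (n : ℕ) :
    sixthRoot τ b ^ n = (τ b) ^ n * (τ⁻¹ b) ^ n * ((b ^ 2)⁻¹) ^ n :=
  Commute.mul_mul_inv_sq_pow h.commute_inv_self h.commute_inv_map h.commute_self_map n

theorem sixthRoot_pow_two : sixthRoot τ b ^ 2 = (τ⁻¹ b) ^ 2 * b⁻¹ := by
  rw [h.sixthRoot_pow, h.sq_map, (h.commute_inv_self.pow_pow 2 3).symm.eq]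
  group

theorem sixthRoot_pow_three : sixthRoot τ b ^ 3 = τ b * b⁻¹ := by
  rw [h.sixthRoot_pow, ← h.sq_eq_inv_pow_three, pow_succ', h.sq_map]
  group

theorem sixthRoot_pow_six : sixthRoot τ b ^ 6 = b := by
  rw [show 6 = 3 * 2 from rfl, pow_mul, h.sixthRoot_pow_three,
    (h.commute_self_map.symm.inv_right).mul_pow, h.sq_map]
  group

theorem sixthRoot_pow_nine : sixthRoot τ b ^ 9 = τ b := by
  rw [show 9 = 6 + 3 from rfl, pow_add, h.sixthRoot_pow_six, h.sixthRoot_pow_three,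
    ← mul_assoc, h.commute_self_map.eq]
  group

theorem sixthRoot : SatisfiesQ23Relations τ (_root_.sixthRoot τ b) := by
  have hb : ∀ k j : ℤ, Commute ((τ ^ k) b) ((τ ^ j) (_root_.sixthRoot τ b)) := fun k j ↦ by
    rw [zpow_apply_sixthRoot]
    exact ((h.commute_zpow _ _).mul_right (h.commute_zpow _ _)).mul_right
      ((h.commute_zpow _ _).pow_right 2).inv_right
  refine ⟨fun i j ↦ ?_, ?_⟩
  · rw [zpow_apply_sixthRoot]
    exact ((hb _ j).mul_left (hb _ j)).mul_left ((hb i j).pow_left 2).inv_left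
  · rw [h.sixthRoot_pow_two, h.sixthRoot_pow_three, map_mul, map_pow, map_inv,
      MulAut.apply_inv_self]
    calc b ^ 2 * (τ b)⁻¹ = b⁻¹ * ((τ b) ^ 2 * (τ b)⁻¹) := by rw [h.sq_map]; group
      _ = τ b * b⁻¹ := by rw [pow_two, mul_inv_cancel_right, h.commute_self_map.inv_left.eq]

end SatisfiesQ23Relations

theorem map_sixthRoot_conj {H : Type*} [Group H] (f : G →* H) (g x : G) :
    f (sixthRoot (MulAut.conj g) x) = sixthRoot (MulAut.conj (f g)) (f x) := by
  simp [sixthRoot, MulAut.conj_apply]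

end SixthRoot


theorem coe_mul32 (v : Z16) : ((mul32 v : Z16) : ℚ) = 3 / 2 * v := rfl

theorem coe_mul32_symm (v : Z16) : ((mul32.symm v : Z16) : ℚ) = 2 / 3 * v := rfl

namespace Z16

def invSixPow (k : ℕ) : Z16 := ⟨1 / 6 ^ k, 1, k, by simp⟩

theorem coe_zsmul_invSixPow (m : ℤ) (k : ℕ) : ((m • invSixPow k : Z16) : ℚ) = m / 6 ^ k := by
  simp [invSixPow, div_eq_mul_inv]

theorem exists_eq_zsmul_invSixPow (v : Z16) : ∃ (m : ℤ) (k : ℕ), v = m • invSixPow k := by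
  obtain ⟨m, k, hv⟩ := v.2
  exact ⟨m, k, Subtype.ext (by rw [hv, coe_zsmul_invSixPow])⟩

theorem zsmul_invSixPow_eq_add (m : ℤ) (k d : ℕ) :
    m • invSixPow k = (6 ^ d * m) • invSixPow (k + d) :=
  Subtype.ext <| by
    rw [coe_zsmul_invSixPow, coe_zsmul_invSixPow, pow_add]; push_cast; field_simp

theorem zsmul_left_injective_invSixPow (k : ℕ) :
    Function.Injective fun m : ℤ ↦ m • invSixPow k := fun m m' h ↦ by
  have := congrArg Subtype.val h
  simp only [coe_zsmul_invSixPow] at this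
  exact_mod_cast (div_left_inj' (by positivity)).mp this

theorem hom_ext {H : Type*} [Group H] {f g : Multiplicative Z16 →* H}
    (h : ∀ k, f (ofAdd (invSixPow k)) = g (ofAdd (invSixPow k))) : f = g := by
  refine MonoidHom.ext fun v ↦ ?_
  obtain ⟨m, k, hv⟩ := exists_eq_zsmul_invSixPow (toAdd v)
  rw [← ofAdd_toAdd v, hv, ofAdd_zsmul, map_zpow, map_zpow, h]

variable {H : Type*} [Group H] {b : ℕ → H}

theorem pow_six_pow (hb : ∀ k, b (k + 1) ^ 6 = b k) (k d : ℕ) : b (k + d) ^ 6 ^ d = b k := by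
  induction d with
  | zero => simp
  | succ d ih => rw [← add_assoc, pow_succ', pow_mul, hb, ih]

theorem zpow_eq_zpow_of_zsmul_eq (hb : ∀ k, b (k + 1) ^ 6 = b k) {m m' : ℤ} {k k' : ℕ}
    (h : m • invSixPow k = m' • invSixPow k') : b k ^ m = b k' ^ m' := by
  wlog hk : k ≤ k' generalizing m m' k k'
  · exact (this h.symm (le_of_not_ge hk)).symm
  obtain ⟨d, rfl⟩ := Nat.exists_eq_add_of_le hk
  rw [zsmul_invSixPow_eq_add m k d] at h
  rw [← zsmul_left_injective_invSixPow _ h, zpow_mul, show (6 : ℤ) ^ d = (6 ^ d : ℕ) by simp,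
    zpow_natCast, pow_six_pow hb]

noncomputable def liftFun (b : ℕ → H) (v : Z16) : H :=
  b (exists_eq_zsmul_invSixPow v).choose_spec.choose ^ (exists_eq_zsmul_invSixPow v).choose

theorem liftFun_zsmul (hb : ∀ k, b (k + 1) ^ 6 = b k) (m : ℤ) (k : ℕ) :
    liftFun b (m • invSixPow k) = b k ^ m :=
  zpow_eq_zpow_of_zsmul_eq hb
    (exists_eq_zsmul_invSixPow (m • invSixPow k)).choose_spec.choose_spec.symm

noncomputable def lift (hb : ∀ k, b (k + 1) ^ 6 = b k) : Multiplicative Z16 →* H :=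
  MonoidHom.mk' (fun v ↦ liftFun b (toAdd v)) fun v w ↦ by
    obtain ⟨m, k, hv⟩ := exists_eq_zsmul_invSixPow (toAdd v)
    obtain ⟨m', k', hw⟩ := exists_eq_zsmul_invSixPow (toAdd w)
    rw [toAdd_mul, hv, hw, zsmul_invSixPow_eq_add m k k', zsmul_invSixPow_eq_add m' k' k,
      add_comm k' k, ← add_zsmul, liftFun_zsmul hb, liftFun_zsmul hb, liftFun_zsmul hb, zpow_add]

theorem lift_ofAdd_zsmul (hb : ∀ k, b (k + 1) ^ 6 = b k) (m : ℤ) (k : ℕ) :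
    lift hb (ofAdd (m • invSixPow k)) = b k ^ m :=
  liftFun_zsmul hb m k

theorem lift_ofAdd_invSixPow (hb : ∀ k, b (k + 1) ^ 6 = b k) (k : ℕ) :
    lift hb (ofAdd (invSixPow k)) = b k := by
  simpa using lift_ofAdd_zsmul hb 1 k

theorem lift_ofAdd_mul32 (hb : ∀ k, b (k + 1) ^ 6 = b k) {α : MulAut H}
    (hα : ∀ k, α (b k) = b (k + 1) ^ 9) (v : Z16) :
    lift hb (ofAdd (mul32 v)) = α (lift hb (ofAdd v)) := by
  obtain ⟨m, k, rfl⟩ := exists_eq_zsmul_invSixPow v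
  have h32 : mul32 (m • invSixPow k) = (9 * m) • invSixPow (k + 1) :=
    Subtype.ext <| by
      rw [coe_zsmul_invSixPow, coe_mul32, coe_zsmul_invSixPow, pow_succ]
      push_cast; field_simp; ring
  rw [h32, lift_ofAdd_zsmul, lift_ofAdd_zsmul, map_zpow, hα, zpow_mul]
  norm_cast

end Z16

section BaumslagSolitar

open HNNExtension HNNExtension.NormalWord
open scoped commutatorElement

def mulLeftMult (p : ℤ) : Multiplicative ℤ →* Multiplicative ℤ :=
  AddMonoidHom.toMultiplicative (AddMonoidHom.mulLeft p)

variable {p q : ℤ}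

theorem ofAdd_mem_range_mulLeftMult {x : ℤ} : ofAdd x ∈ (mulLeftMult p).range ↔ p ∣ x :=
  ⟨fun ⟨m, hm⟩ ↦ ⟨toAdd m, congrArg toAdd hm.symm⟩, fun ⟨m, hm⟩ ↦ ⟨ofAdd m, by rw [hm]; rfl⟩⟩

theorem mulLeftMult_injective [NeZero p] : Function.Injective (mulLeftMult p) := fun x y h ↦ by
  have : p * toAdd x = p * toAdd y := congrArg toAdd h
  exact toAdd.injective (mul_left_cancel₀ (NeZero.ne p) this)

variable (p q) [NeZero p] [NeZero q]

noncomputable def baumslagSolitarEquiv : (mulLeftMult p).range ≃* (mulLeftMult q).range :=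
  (MonoidHom.ofInjective mulLeftMult_injective).symm.trans
    (MonoidHom.ofInjective mulLeftMult_injective)

/-- `BS(p, q)` as the HNN extension of `ℤ` identifying `pℤ` with `qℤ` via `p m ↦ q m`. -/
abbrev BaumslagSolitar : Type :=
  HNNExtension (Multiplicative ℤ) (mulLeftMult p).range (mulLeftMult q).range
    (baumslagSolitarEquiv p q)

variable {p q}

theorem coe_baumslagSolitarEquiv_apply (m : ℤ) (h : ofAdd (p * m) ∈ (mulLeftMult p).range) :
    (baumslagSolitarEquiv p q ⟨ofAdd (p * m), h⟩ : Multiplicative ℤ) = ofAdd (q * m) := by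
  have : (MonoidHom.ofInjective mulLeftMult_injective).symm ⟨ofAdd (p * m), h⟩ = ofAdd m :=
    (MulEquiv.symm_apply_eq _).mpr rfl
  rw [baumslagSolitarEquiv, MulEquiv.trans_apply, this]
  rfl

theorem BaumslagSolitar.t_mul_of_mul_inv (m : ℤ) :
    t * of (ofAdd (p * m)) * t⁻¹ = (of (ofAdd (q * m)) : BaumslagSolitar p q) := by
  have hm : ofAdd (p * m) ∈ (mulLeftMult p).range := ofAdd_mem_range_mulLeftMult.mpr ⟨m, rfl⟩
  rw [← equiv_eq_conj (φ := baumslagSolitarEquiv p q) ⟨_, hm⟩, coe_baumslagSolitarEquiv_apply]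

theorem BaumslagSolitar.t_pow_mul_of_mul_inv (k : ℕ) (m : ℤ) :
    t ^ k * of (ofAdd (p ^ k * m)) * (t ^ k)⁻¹ =
      (of (ofAdd (q ^ k * m)) : BaumslagSolitar p q) := by
  induction k generalizing m with
  | zero => simp
  | succ k ih =>
    calc t ^ (k + 1) * of (ofAdd (p ^ (k + 1) * m)) * (t ^ (k + 1))⁻¹
        = t ^ k * (t * of (ofAdd (p * (p ^ k * m))) * t⁻¹) * (t ^ k)⁻¹ := by
          rw [pow_succ, ← mul_assoc p]; group
      _ = of (ofAdd (q ^ (k + 1) * m)) := by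
          rw [t_mul_of_mul_inv, mul_left_comm, ih, pow_succ, mul_assoc]

theorem BaumslagSolitar.commutatorElement_ne_one {x y : ℤ} (hx : ¬ q ∣ x) (hy : ¬ p ∣ y) :
    ⁅(of (ofAdd x) : BaumslagSolitar p q), (t : BaumslagSolitar p q) * of (ofAdd y) * t⁻¹⁆ ≠ 1 := by
  -- the word `x t y t⁻¹ (-x) t (-y) t⁻¹` contains no pinch, so by Britton's lemma it is not `1`
  let w : ReducedWord (Multiplicative ℤ) (mulLeftMult p).range (mulLeftMult q).range :=
    { head := ofAdd x
      toList := [(1, ofAdd y), (-1, ofAdd (-x)), (1, ofAdd (-y)), (-1, 1)]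
      chain := by
        simp only [List.isChain_cons_cons, List.isChain_singleton, toSubgroup_one,
          toSubgroup_neg_one, ofAdd_mem_range_mulLeftMult, dvd_neg]
        exact ⟨fun h ↦ absurd h hy, fun h ↦ absurd h hx, fun h ↦ absurd h hy, trivial⟩ }
  intro h
  have hw : w.prod (baumslagSolitarEquiv p q) = 1 := by
    rw [← h]
    simp only [w, ReducedWord.prod, List.map_cons, List.map_nil, List.prod_cons, List.prod_nil,
      Units.val_one, Units.val_neg, zpow_one, zpow_neg, map_one, mul_one, ofAdd_neg, map_inv,
      commutatorElement_def]
    group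
  have := ReducedWord.toList_eq_nil_of_mem_of_range _ w (hw ▸ one_mem _)
  simp [w] at this

end BaumslagSolitar

namespace Q23

open SemidirectProduct
open scoped commutatorElement

theorem Qt_mul_inl_mul_inv (v : Z16) : Qt * inl (ofAdd v) * Qt⁻¹ = inl (ofAdd (mul32 v)) := by
  rw [Qt, ← map_inv, ← inl_aut]; rfl

theorem Qt_inv_mul_inl_mul (v : Z16) : Qt⁻¹ * inl (ofAdd v) * Qt = inl (ofAdd (mul32.symm v)) := by
  rw [Qt, ← map_inv, ← inl_aut_inv]; rfl

theorem Qa_eq : Qa = inl (ofAdd (Z16.invSixPow 0)) :=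
  congrArg (fun v ↦ inl (ofAdd v)) (Subtype.ext (by simp [Z16.invSixPow]))

theorem Qt_zpow (n : ℤ) : Qt ^ n = inr (ofAdd n) := by
  rw [Qt, ← map_zpow, ← ofAdd_zsmul, smul_eq_mul, mul_one]

def commRelator (n : ℕ) : FreeGroup (Fin 2) :=
  ⁅(FreeGroup.of 0 : FreeGroup (Fin 2)),
    FreeGroup.of 1 ^ n * FreeGroup.of 0 * (FreeGroup.of 1 ^ n)⁻¹⁆

def relators (s : Set ℕ) : Set (FreeGroup (Fin 2)) := BSrels ∪ commRelator '' s

theorem iUnion_relators_Iic : ⋃ N, relators (Set.Iic N) = relators Set.univ := by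
  simp only [relators, ← Set.union_iUnion, ← Set.image_iUnion, Set.iUnion_Iic]

theorem directed_relators_Iic : Directed (· ⊆ ·) fun N ↦ relators (Set.Iic N) :=
  Monotone.directed_le fun _ _ h ↦
    Set.union_subset_union_right _ (Set.image_mono (Set.Iic_subset_Iic.mpr h))

theorem lift_eq_one_of_mem_relators {H : Type*} [Group H] {a t : H} {s : Set ℕ}
    (hbs : t * a ^ 2 * t⁻¹ = a ^ 3) (hc : ∀ n ∈ s, Commute a (t ^ n * a * (t ^ n)⁻¹)) :
    ∀ r ∈ relators s, FreeGroup.lift ![a, t] r = 1 := by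
  rintro _ (rfl | ⟨n, hn, rfl⟩)
  · simp [hbs]
  · simpa [commRelator, commutatorElement_eq_one_iff_commute] using hc n hn

theorem Qa_pow (n : ℕ) : Qa ^ n = inl (ofAdd (n • Z16.invSixPow 0)) := by
  rw [Qa_eq, ← map_pow, ofAdd_nsmul]

theorem Qt_mul_Qa_sq_mul_inv : Qt * Qa ^ 2 * Qt⁻¹ = Qa ^ 3 := by
  rw [Qa_pow, Qa_pow, Qt_mul_inl_mul_inv]
  congr 2
  exact Subtype.ext (by simp [Z16.invSixPow, coe_mul32])

theorem commute_Qa_conj (n : ℕ) : Commute Qa (Qt ^ n * Qa * (Qt ^ n)⁻¹) := by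
  rw [← zpow_natCast, Qt_zpow, Qa_eq, ← map_inv, ← inl_aut]
  exact (Commute.all _ _).map inl

abbrev Presented : Type := PresentedGroup (relators Set.univ)

def genA : Presented := PresentedGroup.of 0

def genT : Presented := PresentedGroup.of 1

theorem genT_mul_genA_sq_mul_inv : genT * genA ^ 2 * genT⁻¹ = genA ^ 3 := by
  have := PresentedGroup.one_of_mem (rels := relators Set.univ) (Or.inl rfl)
  simp only [map_mul, map_inv, map_pow, mul_inv_eq_one] at this
  exact this

theorem commute_genA_conj (n : ℕ) : Commute genA (genT ^ n * genA * (genT ^ n)⁻¹) := by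
  have := PresentedGroup.one_of_mem (rels := relators Set.univ) (Or.inr ⟨n, trivial, rfl⟩)
  simp only [commRelator, map_commutatorElement, map_mul, map_inv, map_pow,
    commutatorElement_eq_one_iff_commute] at this
  exact this

theorem satisfiesQ23Relations_genA : SatisfiesQ23Relations (MulAut.conj genT) genA := by
  set τ := MulAut.conj genT
  have hshift (i : ℤ) (n : ℕ) : Commute ((τ ^ i) genA) ((τ ^ (i + n)) genA) := by
    rw [zpow_add, MulAut.mul_apply, zpow_natCast, ← map_pow, MulAut.conj_apply]
    exact (commute_genA_conj n).map (τ ^ i)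
  refine ⟨fun i j ↦ ?_, (MulAut.conj_apply _ _).trans genT_mul_genA_sq_mul_inv⟩
  rcases le_total i j with h | h
  · obtain ⟨n, rfl⟩ := Int.le.dest h
    exact hshift i n
  · obtain ⟨n, rfl⟩ := Int.le.dest h
    exact (hshift j n).symm

noncomputable def toQ23 : Presented →* Q23 :=
  PresentedGroup.toGroup
    (lift_eq_one_of_mem_relators Qt_mul_Qa_sq_mul_inv fun n _ ↦ commute_Qa_conj n)

theorem toQ23_genA : toQ23 genA = Qa := PresentedGroup.toGroup.of _

theorem toQ23_genT : toQ23 genT = Qt := PresentedGroup.toGroup.of _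

def rootA (k : ℕ) : Presented := (sixthRoot (MulAut.conj genT))^[k] genA

theorem rootA_succ (k : ℕ) : rootA (k + 1) = sixthRoot (MulAut.conj genT) (rootA k) :=
  Function.iterate_succ_apply' ..

theorem satisfiesQ23Relations_rootA (k : ℕ) :
    SatisfiesQ23Relations (MulAut.conj genT) (rootA k) := by
  induction k with
  | zero => exact satisfiesQ23Relations_genA
  | succ k ih => rw [rootA_succ]; exact ih.sixthRoot

theorem rootA_succ_pow_six (k : ℕ) : rootA (k + 1) ^ 6 = rootA k := by
  rw [rootA_succ, (satisfiesQ23Relations_rootA k).sixthRoot_pow_six]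

theorem conj_genT_rootA (k : ℕ) : MulAut.conj genT (rootA k) = rootA (k + 1) ^ 9 := by
  rw [rootA_succ, (satisfiesQ23Relations_rootA k).sixthRoot_pow_nine]

noncomputable def ofQ23 : Q23 →* Presented :=
  SemidirectProduct.lift (Z16.lift rootA_succ_pow_six) (zpowersHom _ genT) fun g ↦
    MonoidHom.ext fun x ↦ by
      simp only [MonoidHom.comp_apply, MulEquiv.coe_toMonoidHom, phiQ, zpowersHom_apply,
        map_zpow]
      exact MulAut.map_zpow_apply_of_map_apply _
        (fun x ↦ Z16.lift_ofAdd_mul32 _ conj_genT_rootA (toAdd x)) _ x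

theorem ofQ23_Qa : ofQ23 Qa = genA := by
  rw [Qa_eq, ofQ23, lift_inl, Z16.lift_ofAdd_invSixPow]
  rfl

theorem ofQ23_Qt : ofQ23 Qt = genT := by
  rw [Qt, ofQ23, lift_inr, zpowersHom_apply, toAdd_ofAdd, zpow_one]

theorem toQ23_rootA (k : ℕ) : toQ23 (rootA k) = inl (ofAdd (Z16.invSixPow k)) := by
  induction k with
  | zero => exact toQ23_genA.trans Qa_eq
  | succ k ih =>
    rw [rootA_succ, map_sixthRoot_conj, ih, toQ23_genT, sixthRoot, MulAut.conj_apply,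
      MulAut.conj_inv_apply, Qt_mul_inl_mul_inv, Qt_inv_mul_inl_mul, ← map_pow, ← map_inv,
      ← map_mul, ← map_mul, ← ofAdd_nsmul, ← ofAdd_neg, ← ofAdd_add, ← ofAdd_add]
    congr 2
    refine Subtype.ext ?_
    simp only [Z16.invSixPow, one_div, AddSubmonoidClass.mk_nsmul, nsmul_eq_mul, Nat.cast_ofNat,
      AddSubgroup.coe_add, coe_mul32, coe_mul32_symm, NegMemClass.coe_neg, pow_succ, mul_inv_rev]
    ring

noncomputable def mulEquivPresented : Q23 ≃* Presented :=
  MonoidHom.toMulEquiv ofQ23 toQ23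
    (SemidirectProduct.hom_ext
      (Z16.hom_ext fun k ↦ by
        simp [ofQ23, Z16.lift_ofAdd_invSixPow, toQ23_rootA])
      (MonoidHom.ext fun g ↦ by simp [ofQ23, toQ23_genT, Qt_zpow]))
    (PresentedGroup.ext fun i ↦ by
      fin_cases i
      · exact (congrArg ofQ23 toQ23_genA).trans ofQ23_Qa
      · exact (congrArg ofQ23 toQ23_genT).trans ofQ23_Qt)

theorem commRelator_succ_notMem_normalClosure (N : ℕ) :
    commRelator (N + 1) ∉ Subgroup.normalClosure (relators (Set.Iic N)) := by
  open HNNExtension in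
  set a : BaumslagSolitar 2 3 := of (ofAdd (2 ^ N))
  have hconj (k : ℕ) (hk : k ≤ N) : t ^ k * a * (t ^ k)⁻¹ = of (ofAdd (3 ^ k * 2 ^ (N - k))) := by
    rw [← BaumslagSolitar.t_pow_mul_of_mul_inv, ← pow_add, Nat.add_sub_cancel' hk]
  have hpow (n : ℕ) : a ^ n = of (ofAdd ((n : ℤ) * 2 ^ N)) := by
    rw [← map_pow, ← ofAdd_nsmul, nsmul_eq_mul]
  have hrel : ∀ r ∈ relators (Set.Iic N), FreeGroup.lift ![a, t] r = 1 := by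
    refine lift_eq_one_of_mem_relators ?_ fun n hn ↦ ?_
    · rw [hpow, hpow, Nat.cast_ofNat, BaumslagSolitar.t_mul_of_mul_inv, Nat.cast_ofNat]
    · rw [hconj n hn]
      exact (Commute.all _ _).map of
  intro hmem
  have h := PresentedGroup.closure_rels_subset_ker hrel hmem
  refine BaumslagSolitar.commutatorElement_ne_one (p := 2) (q := 3) (x := 2 ^ N) (y := 3 ^ N)
    (fun h3 ↦ absurd (Int.prime_three.dvd_of_dvd_pow h3) (by decide))
    (fun h2 ↦ absurd (Int.prime_two.dvd_of_dvd_pow h2) (by decide)) ?_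
  have hlast : t ^ (N + 1) * a * (t ^ (N + 1))⁻¹ = t * of (ofAdd (3 ^ N)) * t⁻¹ := by
    calc t ^ (N + 1) * a * (t ^ (N + 1))⁻¹ = t * (t ^ N * a * (t ^ N)⁻¹) * t⁻¹ := by group
      _ = t * of (ofAdd (3 ^ N)) * t⁻¹ := by rw [hconj N le_rfl, Nat.sub_self, pow_zero, mul_one]
  rw [MonoidHom.mem_ker] at h
  simpa [commRelator, hlast] using h

end Q23

/-- **Proposition.** The group `Q(2,3)` is not finitely presented: it is not isomorphic to
any presented group on finitely many generators with finitely many relators. -/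
theorem Q23_not_finitely_presented :
    ¬ ∃ (n : ℕ) (rels : Set (FreeGroup (Fin n))),
        rels.Finite ∧ Nonempty (Q23 ≃* PresentedGroup rels) := by
  rintro ⟨n, rels, hfin, ⟨e⟩⟩
  have : Finite rels := hfin.to_subtype
  have : Group.IsFinitelyPresented Q23.Presented := .equiv (e.symm.trans Q23.mulEquivPresented)
  have hker := Group.IsFinitelyPresented.ker_isFinitelyNormallyGenerated _
    (PresentedGroup.mk_surjective (Q23.relators Set.univ))
  rw [PresentedGroup.ker_mk, ← Q23.iUnion_relators_Iic] at hker
  obtain ⟨N, hN⟩ := hker.exists_normalClosure_eq Q23.directed_relators_Iic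
  refine Q23.commRelator_succ_notMem_normalClosure N ?_
  rw [hN, Q23.iUnion_relators_Iic]
  exact Subgroup.subset_normalClosure (Or.inr ⟨N + 1, trivial, rfl⟩)
end

section
/- In the Baumslag–Solitar group BS(2,3) = ⟨a, t ∣ t a² t⁻¹ = a³⟩, the subgroup generated by a⁵ and t has index 5. -/
open Multiplicative

/-!
The cosets `aⁱH` of `H = ⟨a⁵, t⟩` exhaust `BS(2,3)`: left multiplication by `a^±1` shifts `i`,
and writing `i = 2m + 5d` gives `t aⁱ H = a^(3m) (t a^(5d)) H = a^(3m) H`, symmetrically for `t⁻¹`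
with `i = 3m + 5d`. Since `a⁵ ∈ H`, this leaves at most five cosets. Conversely `a ↦ (x ↦ x + 1)`,
`t ↦ (x ↦ -x)` is a transitive action of `BS(2,3)` on `ℤ/5` in which `H` fixes `0`, so `5` divides
the index.
-/

section Cosets

variable {G : Type*} [Group G] {H : Subgroup G} {a t : G} {p q : ℤ} {n : ℕ}

/-- Writing `i = p m + n d` (Bézout), `t a^i H = a^(q m) (t a^(n d)) H = a^(q m) H`. -/
theorem exists_mk_mul_zpow_eq_mk_zpow (hrel : t * a ^ p * t⁻¹ = a ^ q) (hp : IsCoprime p n)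
    (ht : t ∈ H) (ha : a ^ n ∈ H) (i : ℤ) :
    ∃ j : ℤ, ((t * a ^ i : G) : G ⧸ H) = ((a ^ j : G) : G ⧸ H) := by
  obtain ⟨u, v, huv⟩ := hp
  have hconj : t * a ^ (p * (i * u)) = a ^ (q * (i * u)) * t := by
    rw [zpow_mul a p, zpow_mul a q, ← hrel, conj_zpow, inv_mul_cancel_right]
  have hsplit : a ^ i = a ^ (p * (i * u)) * (a ^ n) ^ (i * v) := by
    rw [← zpow_natCast, ← zpow_mul, ← zpow_add]
    congr 1
    linear_combination (-i) * huv
  refine ⟨q * (i * u), ?_⟩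
  rw [hsplit, ← mul_assoc, hconj, mul_assoc]
  exact QuotientGroup.mk_mul_of_mem _ (mul_mem ht (zpow_mem ha _))

theorem exists_mk_eq_mk_zpow (hrel : t * a ^ p * t⁻¹ = a ^ q) (hp : IsCoprime p n)
    (hq : IsCoprime q n) (hgen : Subgroup.closure {a, t} = ⊤) (ha : a ^ n ∈ H) (ht : t ∈ H)
    (g : G) :
    ∃ i : ℤ, (g : G ⧸ H) = ((a ^ i : G) : G ⧸ H) := by
  have hrel_inv : t⁻¹ * a ^ q * t⁻¹⁻¹ = a ^ p := by rw [← hrel]; group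
  suffices h : ∀ i : ℤ, ∃ j : ℤ, ((g * a ^ i : G) : G ⧸ H) = ((a ^ j : G) : G ⧸ H) by
    simpa using h 0
  have hg : g ∈ Subgroup.closure {a, t} := hgen ▸ Subgroup.mem_top g
  induction hg using Subgroup.closure_induction'' with
  | mem x hx =>
    rcases hx with rfl | rfl
    · exact fun i ↦ ⟨1 + i, by rw [zpow_add, zpow_one]⟩
    · exact exists_mk_mul_zpow_eq_mk_zpow hrel hp ht ha
  | inv_mem x hx =>
    rcases hx with rfl | rfl
    · exact fun i ↦ ⟨-1 + i, by rw [zpow_add, zpow_neg_one]⟩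
    · exact exists_mk_mul_zpow_eq_mk_zpow hrel_inv hq (inv_mem ht) ha
  | one => exact fun i ↦ ⟨i, by rw [one_mul]⟩
  | mul x y _ _ hx hy =>
    intro i
    obtain ⟨j, hj⟩ := hy i
    obtain ⟨k, hk⟩ := hx j
    refine ⟨k, ?_⟩
    rw [mul_assoc, ← smul_eq_mul x, ← MulAction.Quotient.smul_mk, hj, MulAction.Quotient.smul_mk,
      smul_eq_mul, hk]

theorem surjective_mk_pow_fin (hn : n ≠ 0) (ha : a ^ n ∈ H)
    (hcover : ∀ g : G, ∃ i : ℤ, (g : G ⧸ H) = ((a ^ i : G) : G ⧸ H)) :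
    Function.Surjective fun k : Fin n ↦ ((a ^ (k : ℕ) : G) : G ⧸ H) := by
  intro x
  induction x using QuotientGroup.induction_on with | H g => ?_
  obtain ⟨i, hi⟩ := hcover g
  have hlt : i % n < n := Int.emod_lt_of_pos i (by omega)
  refine ⟨⟨(i % n).toNat, by omega⟩, ?_⟩
  have hsplit : a ^ i = a ^ (i % n) * (a ^ n) ^ (i / n) := by
    rw [← zpow_natCast, ← zpow_mul, ← zpow_add, Int.emod_add_mul_ediv]
  dsimp only
  rw [hi, hsplit, QuotientGroup.mk_mul_of_mem _ (zpow_mem ha _), ← zpow_natCast,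
    Int.toNat_of_nonneg (Int.emod_nonneg i (by omega))]

end Cosets

namespace BS23

theorem t_conj_a_sq : BSt * BSa ^ (2 : ℤ) * BSt⁻¹ = BSa ^ (3 : ℤ) := by
  have h : BSt * BSa ^ 2 * BSt⁻¹ * (BSa ^ 3)⁻¹ = 1 :=
    PresentedGroup.one_of_mem (Set.mem_singleton _)
  exact_mod_cast mul_inv_eq_one.mp h

theorem closure_a_t_eq_top : Subgroup.closure {BSa, BSt} = ⊤ := by
  rw [← PresentedGroup.closure_range_of]
  congr 1
  ext x
  simp [Fin.exists_fin_two, BSa, BSt, eq_comm]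

/-- `a` acts as `x ↦ x + 1` and `t` as `x ↦ -x`, so `t a² t⁻¹` acts as `x ↦ x - 2 = x + 3`. -/
def toPerm : BS23 →* Equiv.Perm (ZMod 5) :=
  PresentedGroup.toGroup (f := ![Equiv.addRight 1, Equiv.neg _]) <| by
    rintro _ rfl
    simp only [map_mul, map_pow, map_inv, FreeGroup.lift_apply_of]
    decide

theorem toPerm_a : toPerm BSa = Equiv.addRight 1 := PresentedGroup.toGroup.of _

theorem toPerm_t : toPerm BSt = Equiv.neg _ := PresentedGroup.toGroup.of _

instance : MulAction BS23 (ZMod 5) := MulAction.compHom _ toPerm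

theorem a_pow_val_smul_zero (x : ZMod 5) : BSa ^ x.val • (0 : ZMod 5) = x := by
  change toPerm (BSa ^ x.val) 0 = x
  rw [map_pow, toPerm_a]
  revert x
  decide

instance : MulAction.IsPretransitive BS23 (ZMod 5) :=
  MulAction.IsPretransitive.of_orbit fun x ↦ ⟨_, a_pow_val_smul_zero x⟩

theorem closure_le_stabilizer_zero :
    Subgroup.closure {BSa ^ 5, BSt} ≤ MulAction.stabilizer BS23 (0 : ZMod 5) := by
  rw [Subgroup.closure_le]
  rintro _ (rfl | rfl)
  · change toPerm (BSa ^ 5) 0 = 0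
    rw [map_pow, toPerm_a]
    decide
  · change toPerm BSt 0 = 0
    rw [toPerm_t]
    decide

end BS23

/-- **Lemma.** In `BS(2,3) = ⟨a, t ∣ t a² t⁻¹ = a³⟩`, the subgroup generated by `a⁵` and `t`
has index `5`. -/
theorem BS23_closure_index_five :
    (Subgroup.closure {BSa ^ 5, BSt} : Subgroup BS23).index = 5 := by
  set H : Subgroup BS23 := Subgroup.closure {BSa ^ 5, BSt}
  have ha : BSa ^ 5 ∈ H := Subgroup.subset_closure (by simp)
  have ht : BSt ∈ H := Subgroup.subset_closure (by simp)
  have hcover := exists_mk_eq_mk_zpow BS23.t_conj_a_sq (by norm_num) (by norm_num)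
    BS23.closure_a_t_eq_top ha ht
  have hsurj := surjective_mk_pow_fin (by norm_num) ha hcover
  have : Finite (BS23 ⧸ H) := Finite.of_surjective _ hsurj
  have hle : H.index ≤ 5 := Nat.card_fin 5 ▸ Nat.card_le_card_of_surjective _ hsurj
  have hdvd : 5 ∣ H.index := by
    simpa [MulAction.index_stabilizer_of_transitive] using
      Subgroup.index_dvd_of_le BS23.closure_le_stabilizer_zero
  exact hle.antisymm (Nat.le_of_dvd (Nat.pos_of_ne_zero H.index_ne_zero_of_finite) hdvd)
end
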